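/- arXiv:2106.06068 — 3 statements merged into one kernel-verified Lean document; each statement's English description precedes it below -/
import Mathlib

section
/- Let X ⊆ ℝ^m and Y ⊆ ℝ^n be arbitrary sets and A an m×n real matrix. Let x ∈ X be an affine equilibrium strategy of ⊕, i.e., x = Σᵢ αᵢ xᵢ with Σᵢ αᵢ = 1 and each xᵢ ∈ X an NE strategy of ⊕. Then x is a best response to every NE strategy y* ∈ Y of ⊖: for all x' ∈ X, ⟨x', A y*⟩ ≤ ⟨x, A y*⟩. -/
open Matrix

/-- `(x, y)` is a saddle point of the bilinear zero-sum game on `X × Y`. -/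
def IsSaddlePoint {m n : ℕ} (X : Set (Fin m → ℝ)) (Y : Set (Fin n → ℝ))
    (A : Matrix (Fin m) (Fin n) ℝ) (x : Fin m → ℝ) (y : Fin n → ℝ) : Prop :=
  x ∈ X ∧ y ∈ Y ∧
    (∀ x' ∈ X, x' ⬝ᵥ A.mulVec y ≤ x ⬝ᵥ A.mulVec y) ∧
    (∀ y' ∈ Y, x ⬝ᵥ A.mulVec y ≤ x ⬝ᵥ A.mulVec y')

/-- `x` is an NE strategy for the maximizing player. -/
def IsNEStrategyMax {m n : ℕ} (X : Set (Fin m → ℝ)) (Y : Set (Fin n → ℝ))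
    (A : Matrix (Fin m) (Fin n) ℝ) (x : Fin m → ℝ) : Prop :=
  ∃ y ∈ Y, IsSaddlePoint X Y A x y

/-- `y` is an NE strategy for the minimizing player. -/
def IsNEStrategyMin {m n : ℕ} (X : Set (Fin m → ℝ)) (Y : Set (Fin n → ℝ))
    (A : Matrix (Fin m) (Fin n) ℝ) (y : Fin n → ℝ) : Prop :=
  ∃ x ∈ X, IsSaddlePoint X Y A x y

/- All saddle points of a zero-sum game share one value, and any NE strategy of ⊕ attains it
against any NE strategy `y*` of ⊖. The payoff against `y*` is affine in ⊕'s strategy, so an affine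
combination of NE strategies (coefficients summing to one) attains the value as well, which is
the maximum of the payoff against `y*` over `X`. -/

theorem sum_smul_dotProduct_eq_of_forall_eq {ι R n : Type*} [Fintype n] [CommSemiring R]
    (s : Finset ι) (α : ι → R) (xs : ι → n → R) (v : n → R) (c : R)
    (hα : ∑ i ∈ s, α i = 1) (hxs : ∀ i ∈ s, xs i ⬝ᵥ v = c) :
    (∑ i ∈ s, α i • xs i) ⬝ᵥ v = c := by
  calc (∑ i ∈ s, α i • xs i) ⬝ᵥ v = ∑ i ∈ s, α i * c := by
        rw [sum_dotProduct]
        exact Finset.sum_congr rfl fun i hi => by rw [smul_dotProduct, hxs i hi, smul_eq_mul]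
    _ = c := by rw [← Finset.sum_mul, hα, one_mul]

theorem IsSaddlePoint.dotProduct_mulVec_eq {m n : ℕ} {X : Set (Fin m → ℝ)}
    {Y : Set (Fin n → ℝ)} {A : Matrix (Fin m) (Fin n) ℝ} {x₁ x₂ : Fin m → ℝ} {y₁ y₂ : Fin n → ℝ}
    (h₁ : IsSaddlePoint X Y A x₁ y₁) (h₂ : IsSaddlePoint X Y A x₂ y₂) :
    x₁ ⬝ᵥ A *ᵥ y₂ = x₂ ⬝ᵥ A *ᵥ y₂ := by
  obtain ⟨hx₁, hy₁, hmax₁, hmin₁⟩ := h₁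
  obtain ⟨hx₂, hy₂, hmax₂, hmin₂⟩ := h₂
  refine le_antisymm (hmax₂ x₁ hx₁) ?_
  calc x₂ ⬝ᵥ A *ᵥ y₂ ≤ x₂ ⬝ᵥ A *ᵥ y₁ := hmin₂ y₁ hy₁
    _ ≤ x₁ ⬝ᵥ A *ᵥ y₁ := hmax₁ x₂ hx₂
    _ ≤ x₁ ⬝ᵥ A *ᵥ y₂ := hmin₁ y₂ hy₂

theorem affine_equilibrium_best_response_to_NE_general {m n k : ℕ}
    (X : Set (Fin m → ℝ)) (Y : Set (Fin n → ℝ)) (A : Matrix (Fin m) (Fin n) ℝ)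
    (x : Fin m → ℝ)
    (xs : Fin k → (Fin m → ℝ)) (α : Fin k → ℝ)
    (hxs : ∀ i, IsNEStrategyMax X Y A (xs i))
    (hα : ∑ i, α i = 1) (hx : x = ∑ i, α i • xs i)
    (ystar : Fin n → ℝ) (hy : IsNEStrategyMin X Y A ystar) :
    ∀ x' ∈ X, x' ⬝ᵥ A.mulVec ystar ≤ x ⬝ᵥ A.mulVec ystar := by
  obtain ⟨x₀, -, hsaddle⟩ := hy
  have hvalue : x ⬝ᵥ A *ᵥ ystar = x₀ ⬝ᵥ A *ᵥ ystar := by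
    rw [hx]
    refine sum_smul_dotProduct_eq_of_forall_eq _ α xs _ _ hα fun i _ => ?_
    obtain ⟨_, -, hsaddleᵢ⟩ := hxs i
    exact hsaddleᵢ.dotProduct_mulVec_eq hsaddle
  intro x' hx'
  rw [hvalue]
  exact hsaddle.2.2.1 x' hx'

theorem affine_equilibrium_best_response_to_NE {m n k : ℕ}
    (X : Set (Fin m → ℝ)) (Y : Set (Fin n → ℝ)) (A : Matrix (Fin m) (Fin n) ℝ)
    (x : Fin m → ℝ) (hxX : x ∈ X)
    (xs : Fin k → (Fin m → ℝ)) (α : Fin k → ℝ)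
    (hxs : ∀ i, IsNEStrategyMax X Y A (xs i))
    (hα : ∑ i, α i = 1) (hx : x = ∑ i, α i • xs i)
    (ystar : Fin n → ℝ) (hy : IsNEStrategyMin X Y A ystar) :
    ∀ x' ∈ X, x' ⬝ᵥ A.mulVec ystar ≤ x ⬝ᵥ A.mulVec ystar :=
  affine_equilibrium_best_response_to_NE_general X Y A x xs α hxs hα hx ystar hy
end

section
/- Let X ⊆ ℝ^m and Y ⊆ ℝ^n be arbitrary sets, A an m×n real matrix, and let Y* ⊆ Y denote the set of NE strategies of ⊖. If x ∈ X is an affine equilibrium strategy of ⊕, then for every y* ∈ Y*, the profile (x, y*) is a saddle point of the restricted game on X × Y*: ⟨x', A y*⟩ ≤ ⟨x, A y*⟩ for all x' ∈ X, and ⟨x, A y*⟩ ≤ ⟨x, A y'⟩ for all y' ∈ Y* (in fact ⟨x, A y'⟩ = ⟨x, A y*⟩ for all y' ∈ Y*). In other words, every affine equilibrium of ⊕ is a Nash equilibrium strategy of the restricted game in which ⊖ may only play her NE strategies. -/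
/-! By interchangeability of saddle points, every NE strategy of `⊕` earns the value of the game
against every NE strategy of `⊖`. The payoff is affine in `⊕`'s strategy, so an affine combination
of NE strategies earns the value as well, against all of `Y*` at once; the value is `⊕`'s best
response payoff against any `y* ∈ Y*`. -/
open Matrix

theorem sum_smul_dotProduct_of_sum_eq_one {ι m R : Type*} [Fintype ι] [Fintype m]
    [CommSemiring R] {xs : ι → m → R} {α : ι → R} {v : m → R} {c : R}
    (hα : ∑ i, α i = 1) (h : ∀ i, xs i ⬝ᵥ v = c) : (∑ i, α i • xs i) ⬝ᵥ v = c := by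
  simp only [sum_dotProduct, smul_dotProduct, h, smul_eq_mul, ← Finset.sum_mul, hα, one_mul]

namespace IsSaddlePoint

variable {m n : ℕ} {X : Set (Fin m → ℝ)} {Y : Set (Fin n → ℝ)} {A : Matrix (Fin m) (Fin n) ℝ}
  {x₀ x₁ : Fin m → ℝ} {y₀ y₁ : Fin n → ℝ}

theorem cross_payoff_eq (h₀ : IsSaddlePoint X Y A x₀ y₀) (h₁ : IsSaddlePoint X Y A x₁ y₁) :
    x₁ ⬝ᵥ A.mulVec y₀ = x₀ ⬝ᵥ A.mulVec y₀ := by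
  linarith [h₀.2.2.1 x₁ h₁.1, h₀.2.2.2 y₁ h₁.2.1, h₁.2.2.1 x₀ h₀.1, h₁.2.2.2 y₀ h₀.2.1]

theorem payoff_eq (h₀ : IsSaddlePoint X Y A x₀ y₀) (h₁ : IsSaddlePoint X Y A x₁ y₁) :
    x₀ ⬝ᵥ A.mulVec y₀ = x₁ ⬝ᵥ A.mulVec y₁ := by
  linarith [h₀.2.2.1 x₁ h₁.1, h₀.2.2.2 y₁ h₁.2.1, h₁.2.2.1 x₀ h₀.1, h₁.2.2.2 y₀ h₀.2.1]

theorem sum_smul_payoff_eq {k : ℕ} {xs : Fin k → Fin m → ℝ} {α : Fin k → ℝ}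
    (h : IsSaddlePoint X Y A x₀ y₀) (hxs : ∀ i, IsNEStrategyMax X Y A (xs i))
    (hα : ∑ i, α i = 1) : (∑ i, α i • xs i) ⬝ᵥ A.mulVec y₀ = x₀ ⬝ᵥ A.mulVec y₀ :=
  sum_smul_dotProduct_of_sum_eq_one hα fun i =>
    let ⟨_, _, hi⟩ := hxs i
    h.cross_payoff_eq hi

end IsSaddlePoint

theorem affine_equilibrium_is_NE_of_restricted_game_general {m n k : ℕ}
    (X : Set (Fin m → ℝ)) (Y : Set (Fin n → ℝ)) (A : Matrix (Fin m) (Fin n) ℝ)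
    (Ystar : Set (Fin n → ℝ)) (hYstar : Ystar = {y | y ∈ Y ∧ IsNEStrategyMin X Y A y})
    (x : Fin m → ℝ)
    (xs : Fin k → (Fin m → ℝ)) (α : Fin k → ℝ)
    (hxs : ∀ i, IsNEStrategyMax X Y A (xs i))
    (hα : ∑ i, α i = 1) (hx : x = ∑ i, α i • xs i) :
    ∀ ystar ∈ Ystar,
      (∀ x' ∈ X, x' ⬝ᵥ A.mulVec ystar ≤ x ⬝ᵥ A.mulVec ystar) ∧
      (∀ y' ∈ Ystar, x ⬝ᵥ A.mulVec ystar ≤ x ⬝ᵥ A.mulVec y') ∧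
      (∀ y' ∈ Ystar, x ⬝ᵥ A.mulVec y' = x ⬝ᵥ A.mulVec ystar) := by
  intro ystar hystar
  rw [hYstar] at hystar ⊢
  obtain ⟨-, x₀, -, hs₀⟩ := hystar
  have hval : x ⬝ᵥ A.mulVec ystar = x₀ ⬝ᵥ A.mulVec ystar := hx ▸ hs₀.sum_smul_payoff_eq hxs hα
  have hconst : ∀ y' ∈ {y | y ∈ Y ∧ IsNEStrategyMin X Y A y},
      x ⬝ᵥ A.mulVec y' = x ⬝ᵥ A.mulVec ystar := by
    rintro y' ⟨-, x₁, -, hs₁⟩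
    rw [hval, hx, hs₁.sum_smul_payoff_eq hxs hα, hs₁.payoff_eq hs₀]
  refine ⟨fun x' hx' => hval ▸ hs₀.2.2.1 x' hx', fun y' hy' => (hconst y' hy').ge, hconst⟩

theorem affine_equilibrium_is_NE_of_restricted_game {m n k : ℕ}
    (X : Set (Fin m → ℝ)) (Y : Set (Fin n → ℝ)) (A : Matrix (Fin m) (Fin n) ℝ)
    (Ystar : Set (Fin n → ℝ)) (hYstar : Ystar = {y | y ∈ Y ∧ IsNEStrategyMin X Y A y})
    (x : Fin m → ℝ) (hxX : x ∈ X)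
    (xs : Fin k → (Fin m → ℝ)) (α : Fin k → ℝ)
    (hxs : ∀ i, IsNEStrategyMax X Y A (xs i))
    (hα : ∑ i, α i = 1) (hx : x = ∑ i, α i • xs i) :
    ∀ ystar ∈ Ystar,
      (∀ x' ∈ X, x' ⬝ᵥ A.mulVec ystar ≤ x ⬝ᵥ A.mulVec ystar) ∧
      (∀ y' ∈ Ystar, x ⬝ᵥ A.mulVec ystar ≤ x ⬝ᵥ A.mulVec y') ∧
      (∀ y' ∈ Ystar, x ⬝ᵥ A.mulVec y' = x ⬝ᵥ A.mulVec ystar) :=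
  affine_equilibrium_is_NE_of_restricted_game_general X Y A Ystar hYstar x xs α hxs hα hx
end

section
/- Let X ⊆ ℝ^m and Y ⊆ ℝ^n be arbitrary sets and A an m×n real matrix, and suppose the game has a saddle point (x₀, y₀) with value v = ⟨x₀, A y₀⟩. If x ∈ X is an affine equilibrium strategy of ⊕ and y ∈ Y is any strategy of ⊖ that exploits x, i.e., ⟨x, A y⟩ < v, then y is not an NE strategy of ⊖. Hence an opponent who wishes to exploit an affine equilibrium must play a non-Nash strategy, opening herself to counter-exploitation. -/
open Matrix

/-!
Against an NE strategy `y` of ⊖, every NE strategy `xᵢ` of ⊕ earns exactly the game value `v`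
(saddle points are interchangeable). Since `x ↦ ⟨x, A y⟩` is affine, any affine combination
`x = Σ αᵢ xᵢ` with `Σ αᵢ = 1` then also earns exactly `v` against `y`, so `y` cannot exploit `x`.
-/

theorem dotProduct_affineCombination_of_forall_eq {ι κ R : Type*} [Fintype ι] [CommRing R]
    (s : Finset κ) (xs : κ → ι → R) (α : κ → R) (w : ι → R) (c : R)
    (hα : ∑ i ∈ s, α i = 1) (h : ∀ i ∈ s, xs i ⬝ᵥ w = c) :
    (∑ i ∈ s, α i • xs i) ⬝ᵥ w = c := by
  calc (∑ i ∈ s, α i • xs i) ⬝ᵥ w = ∑ i ∈ s, α i * c := by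
        rw [sum_dotProduct]
        exact Finset.sum_congr rfl fun i hi => by rw [smul_dotProduct, h i hi, smul_eq_mul]
    _ = c := by rw [← Finset.sum_mul, hα, one_mul]

namespace IsSaddlePoint

variable {m n : ℕ} {X : Set (Fin m → ℝ)} {Y : Set (Fin n → ℝ)} {A : Matrix (Fin m) (Fin n) ℝ}
  {x₁ x₂ : Fin m → ℝ} {y₁ y₂ : Fin n → ℝ}

theorem value_eq (h₁ : IsSaddlePoint X Y A x₁ y₁) (h₂ : IsSaddlePoint X Y A x₂ y₂) :
    x₁ ⬝ᵥ A *ᵥ y₁ = x₂ ⬝ᵥ A *ᵥ y₂ := by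
  obtain ⟨hx₁, hy₁, hmax₁, hmin₁⟩ := h₁
  obtain ⟨hx₂, hy₂, hmax₂, hmin₂⟩ := h₂
  linarith [hmin₁ y₂ hy₂, hmax₂ x₁ hx₁, hmin₂ y₁ hy₁, hmax₁ x₂ hx₂]

theorem dotProduct_mulVec_cross (h₁ : IsSaddlePoint X Y A x₁ y₁)
    (h₂ : IsSaddlePoint X Y A x₂ y₂) : x₁ ⬝ᵥ A *ᵥ y₂ = x₂ ⬝ᵥ A *ᵥ y₂ :=
  le_antisymm (h₂.2.2.1 x₁ h₁.1) <|
    calc x₂ ⬝ᵥ A *ᵥ y₂ = x₁ ⬝ᵥ A *ᵥ y₁ := (h₁.value_eq h₂).symm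
      _ ≤ x₁ ⬝ᵥ A *ᵥ y₂ := h₁.2.2.2 y₂ h₂.2.1

end IsSaddlePoint

theorem exploiter_of_affine_equilibrium_is_not_NE_general {m n k : ℕ}
    (X : Set (Fin m → ℝ)) (Y : Set (Fin n → ℝ)) (A : Matrix (Fin m) (Fin n) ℝ)
    (x₀ : Fin m → ℝ) (y₀ : Fin n → ℝ) (h₀ : IsSaddlePoint X Y A x₀ y₀)
    (v : ℝ) (hv : v = x₀ ⬝ᵥ A.mulVec y₀)
    (x : Fin m → ℝ)
    (xs : Fin k → (Fin m → ℝ)) (α : Fin k → ℝ)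
    (hxs : ∀ i, IsNEStrategyMax X Y A (xs i))
    (hα : ∑ i, α i = 1) (hx : x = ∑ i, α i • xs i)
    (y : Fin n → ℝ) (hexp : x ⬝ᵥ A.mulVec y < v) :
    ¬ IsNEStrategyMin X Y A y := by
  rintro ⟨x', -, hsp⟩
  have hval : x' ⬝ᵥ A *ᵥ y = v := hv ▸ hsp.value_eq h₀
  have hxs_val : ∀ i ∈ Finset.univ, xs i ⬝ᵥ A *ᵥ y = v := fun i _ => by
    obtain ⟨_, -, hi⟩ := hxs i
    rw [hi.dotProduct_mulVec_cross hsp, hval]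
  have hx_val : x ⬝ᵥ A *ᵥ y = v :=
    hx ▸ dotProduct_affineCombination_of_forall_eq _ xs α _ v hα hxs_val
  exact hexp.ne hx_val

theorem exploiter_of_affine_equilibrium_is_not_NE {m n k : ℕ}
    (X : Set (Fin m → ℝ)) (Y : Set (Fin n → ℝ)) (A : Matrix (Fin m) (Fin n) ℝ)
    (x₀ : Fin m → ℝ) (y₀ : Fin n → ℝ) (h₀ : IsSaddlePoint X Y A x₀ y₀)
    (v : ℝ) (hv : v = x₀ ⬝ᵥ A.mulVec y₀)
    (x : Fin m → ℝ) (hxX : x ∈ X)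
    (xs : Fin k → (Fin m → ℝ)) (α : Fin k → ℝ)
    (hxs : ∀ i, IsNEStrategyMax X Y A (xs i))
    (hα : ∑ i, α i = 1) (hx : x = ∑ i, α i • xs i)
    (y : Fin n → ℝ) (hyY : y ∈ Y) (hexp : x ⬝ᵥ A.mulVec y < v) :
    ¬ IsNEStrategyMin X Y A y :=
  exploiter_of_affine_equilibrium_is_not_NE_general X Y A x₀ y₀ h₀ v hv x xs α hxs hα hx y hexp
end
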